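/- arXiv:0912.2212 — 4 statements merged into one kernel-verified Lean document; each statement's English description precedes it below -/
import Mathlib

section
/- Every element of the biHecke monoid preserves left weak order: if f is any composition of the operators π_i and π̄_i on a finite Coxeter group W, then u ≤_L v implies u·f ≤_L v·f. -/
open scoped Classical

noncomputable section

variable {B W : Type*} [Group W] {M : CoxeterMatrix B}

/-- The elementary bubble antisorting operator `π_i` on a Coxeter group:
`w·π_i = w` if `i` is a right descent of `w`, and `w·π_i = w s_i` otherwise. -/
noncomputable def piOp (cs : CoxeterSystem M W) (i : B) : W → W :=
  fun w => if cs.IsRightDescent w i then w else w * cs.simple i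

/-- The elementary bubble sorting operator `π̄_i` on a Coxeter group:
`w·π̄_i = w s_i` if `i` is a right descent of `w`, and `w·π̄_i = w` otherwise. -/
noncomputable def pibOp (cs : CoxeterSystem M W) (i : B) : W → W :=
  fun w => if cs.IsRightDescent w i then w * cs.simple i else w

/-- The biHecke monoid: the submonoid of `Function.End W` generated by the antisorting
operators `π_i` and the sorting operators `π̄_i`. -/
noncomputable def biHecke (cs : CoxeterSystem M W) : Submonoid (Function.End W) :=
  Submonoid.closure ({f | ∃ i, f = piOp cs i} ∪ {f | ∃ i, f = pibOp cs i})

/-- Left weak order: `u ≤_L v` iff `ℓ(v u⁻¹) + ℓ(u) = ℓ(v)`. -/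
noncomputable def leL (cs : CoxeterSystem M W) (u v : W) : Prop :=
  cs.length (v * u⁻¹) + cs.length u = cs.length v

/-- Right weak order: `u ≤_R v` iff `ℓ(u) + ℓ(u⁻¹ v) = ℓ(v)`. -/
noncomputable def leR (cs : CoxeterSystem M W) (u v : W) : Prop :=
  cs.length u + cs.length (u⁻¹ * v) = cs.length v

/-- Bruhat order: `u ≤_B v` iff some reduced word of `v` has a subword with product `u`. -/
noncomputable def leB (cs : CoxeterSystem M W) (u v : W) : Prop :=
  ∃ l : List B, cs.IsReduced l ∧ cs.wordProd l = v ∧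
    ∃ l' : List B, l'.Sublist l ∧ cs.wordProd l' = u

/-- Right action of a word of operators: apply the operators from left to right. -/
noncomputable def actWord (ops : B → W → W) (l : List B) (w : W) : W :=
  l.foldl (fun x i => ops i x) w

/-- The function `e_w = π_{w⁻¹ w₀} π̄_{w₀ w}` (given reduced words `l1` for `w⁻¹ w₀` and
`l2` for `w₀ w`), acting on the right. -/
noncomputable def eIdem (cs : CoxeterSystem M W) (l1 l2 : List B) : W → W :=
  fun x => actWord (pibOp cs) l2 (actWord (piOp cs) l1 x)

/-- The parabolic subgroup `W_K`. -/
noncomputable def parab (cs : CoxeterSystem M W) (K : Set B) : Subgroup W :=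
  Subgroup.closure (cs.simple '' K)

/-- `K` is a right block of `w` if `w W_K = W_J w` for some `J`. -/
noncomputable def isRightBlock (cs : CoxeterSystem M W) (w : W) (K : Set B) : Prop :=
  ∃ J : Set B, (fun x => w * x) '' (parab cs K : Set W) = (fun x => x * w) '' (parab cs J : Set W)

/-- `J` is a left block of `w` if `w W_K = W_J w` for some `K`. -/
noncomputable def isLeftBlock (cs : CoxeterSystem M W) (w : W) (J : Set B) : Prop :=
  ∃ K : Set B, (fun x => w * x) '' (parab cs K : Set W) = (fun x => x * w) '' (parab cs J : Set W)

/-- The cutting relation: `v ⊑ w` iff `v = w^K` for some right block `K` of `w`, i.e.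
`w = v · u` with `u ∈ W_K` and `v` has no right descents in `K`. -/
noncomputable def cuts (cs : CoxeterSystem M W) (v w : W) : Prop :=
  ∃ K J : Set B,
    ((fun x => w * x) '' (parab cs K : Set W) = (fun x => x * w) '' (parab cs J : Set W)) ∧
    ∃ u ∈ parab cs K, w = v * u ∧ ∀ k ∈ K, ¬ cs.IsRightDescent v k

/-- Covering relation of left weak order. -/
noncomputable def covL (cs : CoxeterSystem M W) (x y : W) : Prop :=
  leL cs x y ∧ x ≠ y ∧ ∀ z, leL cs x z → leL cs z y → z = x ∨ z = y

end


/-!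
For a word `ω` and a reflection `t`, the sign `(-1) ^ count t (rightInvSeq ω)` depends only on the
product of `ω`: it is the sign component of the action of `W` on `W × ℤˣ` in which `s i`
conjugates the first component and flips the sign of `s i`. The braid relations hold for this
action because the right inversion sequence of the alternating word of length `2 m(i, i')` runs
twice through the same `m(i, i')` reflections. Hence every right descent `i` of the product of
`ω` has `s i` in the right inversion sequence of `ω` (the exchange property).

If `u ≤_L v`, every right descent of `u` is one of `v`, and `π_i`, `π̄_i` act alike on `u` and
`v` unless `i` is a descent of `v` but not of `u`. In that case the exchange property for the
reduced word of `v` made of a reduced word of `v u⁻¹` followed by one of `u` puts `s i` in the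
part coming from `v u⁻¹`, so `u s_i u⁻¹` shortens `v u⁻¹` by one; this gives both
`u s_i ≤_L v` and `u ≤_L v s_i`.
-/

namespace CoxeterSystem

variable {B W : Type*} [Group W] {M : CoxeterMatrix B} (cs : CoxeterSystem M W)

theorem rightInvSeq_append (ω ω' : List B) :
    cs.rightInvSeq (ω ++ ω') =
      (cs.rightInvSeq ω).map (MulAut.conj (cs.wordProd ω')⁻¹) ++ cs.rightInvSeq ω' := by
  induction ω with
  | nil => rfl
  | cons i ω ih =>
    simp only [List.cons_append, rightInvSeq, ih, List.map_cons, MulAut.conj_apply,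
      wordProd_append, mul_inv_rev, inv_inv]
    group

theorem alternatingWord_two_mul_succ (i i' : B) (m : ℕ) :
    alternatingWord i i' (2 * (m + 1)) = i :: i' :: alternatingWord i i' (2 * m) := by
  rw [show 2 * (m + 1) = 2 * m + 1 + 1 by ring, alternatingWord_succ', alternatingWord_succ']
  simp

theorem prod_map_alternatingWord_two_mul {G : Type*} [Monoid G] (f : B → G) (i i' : B) (m : ℕ) :
    ((alternatingWord i i' (2 * m)).map f).prod = (f i * f i') ^ m := by
  induction m with
  | zero => simp [alternatingWord]
  | succ m ih =>
    rw [alternatingWord_two_mul_succ, List.map_cons, List.map_cons, List.prod_cons,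
      List.prod_cons, ih, pow_succ', mul_assoc]

theorem reverse_alternatingWord_two_mul (i i' : B) (m : ℕ) :
    (alternatingWord i i' (2 * m)).reverse = alternatingWord i' i (2 * m) := by
  induction m with
  | zero => rfl
  | succ m ih =>
    rw [alternatingWord_two_mul_succ, List.reverse_cons, List.reverse_cons, ih,
      show 2 * (m + 1) = 2 * m + 1 + 1 by ring, alternatingWord_succ, alternatingWord_succ]
    simp

theorem even_count_rightInvSeq_alternatingWord (i i' : B) (t : W) :
    Even ((cs.rightInvSeq (alternatingWord i i' (2 * M i i'))).count t) := by
  set f : ℕ → W := fun k => cs.simple i' * (cs.simple i * cs.simple i') ^ k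
  have hlis :
      cs.leftInvSeq (alternatingWord i' i (2 * M i i')) = (List.range (2 * M i i')).map f := by
    refine List.ext_getElem (by simp) fun k hk _ => ?_
    rw [getElem_leftInvSeq_alternatingWord _ _ _ _ _ (by simpa using hk), List.getElem_map,
      List.getElem_range, prod_alternatingWord_eq_mul_pow, show (2 * k + 1) / 2 = k by omega]
    simp [f]
  have hperiodic : (fun k => f (M i i' + k)) = f := by
    funext k
    simp only [f, pow_add, cs.simple_mul_simple_pow, one_mul]
  rw [← reverse_alternatingWord_two_mul i' i, rightInvSeq_reverse, List.count_reverse, hlis,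
    two_mul, List.range_add, List.map_append, List.map_map, List.count_append, Function.comp_def,
    hperiodic]
  exact Even.add_self _

noncomputable def signedConj (i : B) : Function.End (W × ℤˣ) :=
  fun p => (cs.simple i * p.1 * cs.simple i, if p.1 = cs.simple i then -p.2 else p.2)

theorem prod_map_signedConj_apply (ω : List B) (t : W) (ε : ℤˣ) :
    (ω.map cs.signedConj).prod (t, ε) =
      (cs.wordProd ω * t * (cs.wordProd ω)⁻¹, (-1) ^ (cs.rightInvSeq ω).count t * ε) := by
  induction ω with
  | nil =>
    show (t, ε) = _
    simp
  | cons i ω ih =>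
    have hconj : cs.wordProd ω * t * (cs.wordProd ω)⁻¹ = cs.simple i ↔
        (cs.wordProd ω)⁻¹ * cs.simple i * cs.wordProd ω = t := by
      constructor <;> intro h <;> rw [← h] <;> group
    change cs.signedConj i ((ω.map cs.signedConj).prod (t, ε)) = _
    rw [ih, signedConj, rightInvSeq, List.count_cons]
    simp only [beq_iff_eq, wordProd_cons, mul_inv_rev, inv_simple, hconj]
    refine Prod.ext (by group) ?_
    split_ifs <;> simp [pow_succ]

theorem isLiftable_signedConj : M.IsLiftable cs.signedConj := by
  intro i i'
  rw [← prod_map_alternatingWord_two_mul]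
  funext ⟨t, ε⟩
  have hprod : cs.wordProd (alternatingWord i i' (2 * M i i')) = 1 := by
    rw [wordProd, prod_map_alternatingWord_two_mul, simple_mul_simple_pow]
  rw [prod_map_signedConj_apply, hprod,
    (cs.even_count_rightInvSeq_alternatingWord i i' t).neg_one_pow]
  show _ = (t, ε)
  simp

theorem neg_one_pow_count_rightInvSeq_congr {ω ω' : List B}
    (h : cs.wordProd ω = cs.wordProd ω') (t : W) :
    (-1 : ℤˣ) ^ (cs.rightInvSeq ω).count t = (-1) ^ (cs.rightInvSeq ω').count t := by
  have hlift (τ : List B) :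
      cs.lift ⟨_, cs.isLiftable_signedConj⟩ (cs.wordProd τ) = (τ.map cs.signedConj).prod := by
    rw [wordProd, map_list_prod, List.map_map]
    congr 2
    funext i
    exact cs.lift_apply_simple _ i
  have := congrArg (fun f : Function.End (W × ℤˣ) => (f (t, 1)).2)
    ((hlift ω).symm.trans ((congrArg _ h).trans (hlift ω')))
  simpa only [prod_map_signedConj_apply, mul_one] using this

theorem simple_mem_rightInvSeq {ω : List B} {i : B}
    (hi : cs.IsRightDescent (cs.wordProd ω) i) : cs.simple i ∈ cs.rightInvSeq ω := by
  obtain ⟨τ, hτ, hτω⟩ := cs.exists_isReduced (cs.wordProd ω * cs.simple i)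
  have hnot : cs.simple i ∉ cs.rightInvSeq τ := fun hmem =>
    cs.isRightDescent_iff_not_isRightDescent_mul.mp hi <| hτω ▸
      (cs.isRightInversion_simple_iff_isRightDescent _ _).mp
        (cs.isRightInversion_of_mem_rightInvSeq hτ hmem)
  have hcount : (cs.rightInvSeq (τ.concat i)).count (cs.simple i) = 1 := by
    have hconj := (cs.rightInvSeq τ).count_map_of_injective _ (MulAut.conj (cs.simple i)).injective
      (cs.simple i)
    rw [MulAut.conj_apply, mul_inv_cancel_right] at hconj
    rw [rightInvSeq_concat, List.concat_eq_append, List.count_append, List.count_singleton_self,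
      hconj, List.count_eq_zero.mpr hnot]
  have hprod : cs.wordProd (τ.concat i) = cs.wordProd ω := by
    rw [wordProd_concat, ← hτω, simple_mul_simple_cancel_right]
  have hsign := cs.neg_one_pow_count_rightInvSeq_congr hprod (cs.simple i)
  rw [hcount, pow_one] at hsign
  by_contra hmem
  rw [List.count_eq_zero.mpr hmem, pow_zero] at hsign
  exact absurd hsign (by decide)

end CoxeterSystem

section WeakOrder

open CoxeterSystem

variable {B W : Type*} [Group W] {M : CoxeterMatrix B} (cs : CoxeterSystem M W)
variable {u v : W} {i : B}

theorem isRightDescent_of_leL (h : leL cs u v) (hu : cs.IsRightDescent u i) :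
    cs.IsRightDescent v i := by
  have hle := cs.length_mul_le (v * u⁻¹) (u * cs.simple i)
  rw [show v * u⁻¹ * (u * cs.simple i) = v * cs.simple i by group] at hle
  have hu' := cs.isRightDescent_iff.mp hu
  unfold leL at h
  unfold IsRightDescent
  omega

theorem mul_simple_leL_mul_simple (h : leL cs u v)
    (hi : cs.IsRightDescent u i ↔ cs.IsRightDescent v i) :
    leL cs (u * cs.simple i) (v * cs.simple i) := by
  unfold leL at *
  rw [mul_inv_rev, inv_simple, ← mul_assoc, simple_mul_simple_cancel_right]
  by_cases hu : cs.IsRightDescent u i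
  · have hu' := cs.isRightDescent_iff.mp hu
    have hv' := cs.isRightDescent_iff.mp (hi.mp hu)
    omega
  · have hu' := cs.not_isRightDescent_iff.mp hu
    have hv' := cs.not_isRightDescent_iff.mp (mt hi.mpr hu)
    omega

theorem mul_simple_leL (h : leL cs u v) (hu : ¬cs.IsRightDescent u i)
    (hv : cs.IsRightDescent v i) : leL cs (u * cs.simple i) v := by
  obtain ⟨a, ha, hau⟩ := cs.exists_isReduced (v * u⁻¹)
  obtain ⟨b, hb, hbu⟩ := cs.exists_isReduced u
  have hab : cs.wordProd (a ++ b) = v := by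
    rw [wordProd_append, ← hau, ← hbu, inv_mul_cancel_right]
  have hmem := cs.simple_mem_rightInvSeq (hab ▸ hv)
  rw [rightInvSeq_append, List.mem_append, List.mem_map] at hmem
  rcases hmem with ⟨x, hx, hxs⟩ | hmem
  · have hx' : x = u * cs.simple i * u⁻¹ := by
      rw [← hxs, MulAut.conj_apply, ← hbu]
      group
    have hlt := (cs.isRightInversion_of_mem_rightInvSeq ha hx).2
    rw [← hau, hx', show v * u⁻¹ * (u * cs.simple i * u⁻¹) = v * cs.simple i * u⁻¹ by group]
      at hlt
    have hle := cs.length_mul_le (v * cs.simple i * u⁻¹) u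
    rw [inv_mul_cancel_right] at hle
    have hu' := cs.not_isRightDescent_iff.mp hu
    have hv' := cs.isRightDescent_iff.mp hv
    unfold leL at *
    rw [mul_inv_rev, inv_simple, ← mul_assoc]
    omega
  · exact absurd ((cs.isRightInversion_simple_iff_isRightDescent _ _).mp
      (hbu ▸ cs.isRightInversion_of_mem_rightInvSeq hb hmem)) hu

theorem leL_mul_simple (h : leL cs u v)
    (hu : ¬cs.IsRightDescent u i) (hv : cs.IsRightDescent v i) :
    leL cs u (v * cs.simple i) := by
  have h' := mul_simple_leL cs h hu hv
  have hu' := cs.not_isRightDescent_iff.mp hu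
  have hv' := cs.isRightDescent_iff.mp hv
  unfold leL at *
  rw [mul_inv_rev, inv_simple, ← mul_assoc] at h'
  omega

theorem leL_piOp (h : leL cs u v) : leL cs (piOp cs i u) (piOp cs i v) := by
  unfold piOp
  by_cases hu : cs.IsRightDescent u i
  · rw [if_pos hu, if_pos (isRightDescent_of_leL cs h hu)]
    exact h
  by_cases hv : cs.IsRightDescent v i
  · rw [if_neg hu, if_pos hv]
    exact mul_simple_leL cs h hu hv
  · rw [if_neg hu, if_neg hv]
    exact mul_simple_leL_mul_simple cs h (iff_of_false hu hv)

theorem leL_pibOp (h : leL cs u v) : leL cs (pibOp cs i u) (pibOp cs i v) := by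
  unfold pibOp
  by_cases hu : cs.IsRightDescent u i
  · have hv := isRightDescent_of_leL cs h hu
    rw [if_pos hu, if_pos hv]
    exact mul_simple_leL_mul_simple cs h (iff_of_true hu hv)
  by_cases hv : cs.IsRightDescent v i
  · rw [if_neg hu, if_pos hv]
    exact leL_mul_simple cs h hu hv
  · rw [if_neg hu, if_neg hv]
    exact h

end WeakOrder

theorem biHecke_preserves_leftOrder_general {B W : Type*} [Group W] {M : CoxeterMatrix B}
    (cs : CoxeterSystem M W) (f : Function.End W) (hf : f ∈ biHecke cs)
    (u v : W) (huv : leL cs u v) : leL cs (f u) (f v) := by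
  induction hf using Submonoid.closure_induction generalizing u v with
  | mem g hg =>
    rcases hg with ⟨i, rfl⟩ | ⟨i, rfl⟩
    · exact leL_piOp cs huv
    · exact leL_pibOp cs huv
  | one => exact huv
  | mul g₁ g₂ _ _ ih₁ ih₂ => exact ih₁ _ _ (ih₂ u v huv)

/-- Every element of the biHecke monoid preserves left weak order. -/
theorem biHecke_preserves_leftOrder {B W : Type*} [Group W] [Finite W] {M : CoxeterMatrix B}
    (cs : CoxeterSystem M W) (f : Function.End W) (hf : f ∈ biHecke cs)
    (u v : W) (huv : leL cs u v) : leL cs (f u) (f v) :=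
  biHecke_preserves_leftOrder_general cs f hf u v huv
end

section
/- Every element of the biHecke monoid preserves Bruhat order: if f is any composition of the operators π_i and π̄_i on a finite Coxeter group W, then u ≤_B v implies u·f ≤_B v·f. -/
open scoped Classical

/-!
Write `u ≤ w` for the order generated by the steps `x < x t` with `t` a reflection and
`ℓ x < ℓ (x t)`; by the subword property this is `leB`. The strong exchange property, proved
with the sign representation of Björner–Brenti, shows that a step `u < w` either satisfies
`u s = w` or lifts to a step `u s < w s`. Hence `u ≤ w` implies both
`u s ≤ w ∨ u s ≤ w s` and `u ≤ w s ∨ u s ≤ w s`. As `w·π_i = max (w, w s_i)` and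
`w·π̄_i = min (w, w s_i)`, these say precisely that every `π_i` and every `π̄_i` is monotone,
and so is every composite of them.
-/

theorem conj_eq_iff_eq_conj {G : Type*} [Group G] {a b t c : G} (h : b * a = 1) :
    a * t * b = c ↔ t = b * c * a := by
  obtain rfl := eq_inv_of_mul_eq_one_left h
  constructor <;> rintro rfl <;> group

namespace CoxeterSystem

variable {B W : Type*} [Group W] {M : CoxeterMatrix B} (cs : CoxeterSystem M W)

local prefix:100 "s" => cs.simple
local prefix:100 "π" => cs.wordProd
local prefix:100 "ℓ" => cs.length
local prefix:100 "ris" => cs.rightInvSeq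

noncomputable def signPerm (i : B) : Equiv.Perm (W × ℤˣ) :=
  Function.Involutive.toPerm (fun p => (s i * p.1 * s i, if p.1 = s i then -p.2 else p.2))
    fun ⟨t, ε⟩ => by
      by_cases ht : t = s i
      · simp [ht, cs.simple_mul_simple_self]
      · have hconj : s i * t * s i ≠ s i := by
          rwa [Ne, conj_eq_iff_eq_conj (cs.simple_mul_simple_self i),
            cs.simple_mul_simple_cancel_right]
        simp only [ht, hconj, if_false]
        simp [mul_assoc, cs.simple_mul_simple_cancel_left]

theorem signPerm_apply (i : B) (t : W) (ε : ℤˣ) :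
    cs.signPerm i (t, ε) = (s i * t * s i, if t = s i then -ε else ε) := rfl

theorem simple_mul_pow_eq_pow_mul_simple (i j : B) (k : ℕ) :
    s j * (s i * s j) ^ k = (s j * s i) ^ k * s j :=
  (SemiconjBy.pow_right (by simp only [SemiconjBy, mul_assoc]) k).eq

theorem pow_simple_mul_simple_mul_pow_eq_one (i j : B) (k : ℕ) :
    (s j * s i) ^ k * (s i * s j) ^ k = 1 := by
  rw [show s j * s i = (s i * s j)⁻¹ by simp [cs.inv_simple], inv_pow, inv_mul_cancel]

theorem signPerm_mul_pow_apply (i j : B) (k : ℕ) (t : W) (ε : ℤˣ) :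
    ((cs.signPerm i * cs.signPerm j) ^ k) (t, ε) =
      ((s i * s j) ^ k * t * (s j * s i) ^ k,
        (∏ n ∈ Finset.range (2 * k), if t = (s j * s i) ^ n * s j then -1 else 1) * ε) := by
  induction k with
  | zero => simp
  | succ k ih =>
    set x := s i * s j
    set y := s j * s i
    have hyx : y ^ k * x ^ k = 1 := cs.pow_simple_mul_simple_mul_pow_eq_one i j k
    have hjx : s j * x ^ k = y ^ k * s j := cs.simple_mul_pow_eq_pow_mul_simple i j k
    have hfix_j : x ^ k * t * y ^ k = s j ↔ t = y ^ (2 * k) * s j := by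
      rw [conj_eq_iff_eq_conj hyx, mul_assoc, hjx, ← mul_assoc, ← pow_add, two_mul]
    have hfix_i : s j * (x ^ k * t * y ^ k) * s j = s i ↔ t = y ^ (2 * k + 1) * s j := by
      rw [conj_eq_iff_eq_conj (cs.simple_mul_simple_self j), conj_eq_iff_eq_conj hyx,
        show y ^ (2 * k + 1) * s j = y ^ k * y * (s j * x ^ k) by
          rw [hjx, ← mul_assoc, ← pow_succ, ← pow_add]; ring_nf]
      simp only [y, mul_assoc]
    rw [pow_succ', Equiv.Perm.mul_apply, ih, Equiv.Perm.mul_apply, signPerm_apply,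
      signPerm_apply, hfix_j, hfix_i, Nat.mul_succ, Finset.prod_range_succ,
      Finset.prod_range_succ]
    refine Prod.ext ?_ ?_
    · simp only [x, y, pow_succ' (s i * s j), pow_succ (s j * s i), mul_assoc]
    · split_ifs <;> simp

theorem isLiftable_signPerm : M.IsLiftable cs.signPerm := by
  intro i j
  ext ⟨t, ε⟩ <;> rw [signPerm_mul_pow_apply, Equiv.Perm.one_apply]
  · simp
  · -- the factors have period `M i j` in `n`, so their product over `n < 2 * M i j` is a square
    have hperiod : ∀ n, (s j * s i) ^ (M i j + n) = (s j * s i) ^ n := fun n => by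
      rw [pow_add, cs.simple_mul_simple_pow', one_mul]
    simp only [two_mul, Finset.prod_range_add, hperiod, ← sq, Int.units_sq, one_mul]

/-- The sign representation of Björner–Brenti, *Combinatorics of Coxeter groups*, §1.4. -/
noncomputable def signRep : W →* Equiv.Perm (W × ℤˣ) :=
  cs.lift ⟨cs.signPerm, cs.isLiftable_signPerm⟩

theorem signRep_simple (i : B) : cs.signRep (s i) = cs.signPerm i :=
  cs.lift_apply_simple _ i

theorem signRep_wordProd (ω : List B) (t : W) (ε : ℤˣ) :
    cs.signRep (π ω) (t, ε) = (π ω * t * (π ω)⁻¹, (-1) ^ (ris ω).count t * ε) := by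
  induction ω with
  | nil => simp
  | cons i ω ih =>
    have hfix : π ω * t * (π ω)⁻¹ = s i ↔ (π ω)⁻¹ * s i * π ω = t := by
      rw [conj_eq_iff_eq_conj (inv_mul_cancel _), eq_comm]
    rw [wordProd_cons, map_mul, Equiv.Perm.mul_apply, ih, signRep_simple, signPerm_apply,
      rightInvSeq, List.count_cons]
    simp only [beq_iff_eq, ← hfix]
    refine Prod.ext ?_ ?_
    · simp only [mul_inv_rev, cs.inv_simple, mul_assoc]
    · split_ifs <;> simp [pow_succ]

/-- For a reflection `t`, this is `-1` exactly when `t` is a right inversion of `w`. -/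
noncomputable def inversionSign (w t : W) : ℤˣ := (cs.signRep w (t, 1)).2

theorem inversionSign_wordProd (ω : List B) (t : W) :
    cs.inversionSign (π ω) t = (-1) ^ (ris ω).count t := by
  rw [inversionSign, signRep_wordProd, mul_one]

theorem signRep_apply (w t : W) (ε : ℤˣ) :
    cs.signRep w (t, ε) = (w * t * w⁻¹, cs.inversionSign w t * ε) := by
  obtain ⟨ω, rfl⟩ := cs.wordProd_surjective w
  rw [signRep_wordProd, inversionSign_wordProd]

theorem inversionSign_mul (a b t : W) :
    cs.inversionSign (a * b) t = cs.inversionSign a (b * t * b⁻¹) * cs.inversionSign b t := by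
  rw [inversionSign, map_mul, Equiv.Perm.mul_apply, cs.signRep_apply b, cs.signRep_apply a,
    mul_one]

theorem inversionSign_one (t : W) : cs.inversionSign 1 t = 1 := by
  simp [inversionSign]

theorem inversionSign_simple (i : B) (t : W) :
    cs.inversionSign (s i) t = if t = s i then -1 else 1 := by
  rw [inversionSign, signRep_simple, signPerm_apply]

theorem inversionSign_self {t : W} (ht : cs.IsReflection t) : cs.inversionSign t t = -1 := by
  obtain ⟨w, i, rfl⟩ := ht
  have hconj : w⁻¹ * (w * s i * w⁻¹) * w⁻¹⁻¹ = s i := by group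
  have hcancel := cs.inversionSign_mul w w⁻¹ (w * s i * w⁻¹)
  rw [mul_inv_cancel, inversionSign_one, hconj] at hcancel
  rw [inversionSign_mul, hconj, inversionSign_mul, inversionSign_simple, if_pos rfl,
    mul_inv_cancel_right, mul_right_comm, ← hcancel, one_mul]

theorem inversionSign_mul_self (w : W) {t : W} (ht : cs.IsReflection t) :
    cs.inversionSign (w * t) t = -cs.inversionSign w t := by
  rw [inversionSign_mul, mul_inv_cancel_right, cs.inversionSign_self ht, mul_neg_one]

theorem inversionSign_eq_one_of_length_lt {w t : W} (hlt : ℓ w < ℓ (w * t)) :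
    cs.inversionSign w t = 1 := by
  induction hn : ℓ w using Nat.strong_induction_on generalizing w with
  | _ n ih =>
    rcases eq_or_ne w 1 with rfl | hw
    · exact cs.inversionSign_one t
    obtain ⟨j, hj⟩ := cs.exists_leftDescent_of_ne_one hw
    obtain ⟨w', rfl⟩ : ∃ w', w = s j * w' :=
      ⟨s j * w, (cs.simple_mul_simple_cancel_left j).symm⟩
    rw [IsLeftDescent, cs.simple_mul_simple_cancel_left] at hj
    have hlen : ℓ (s j * w') = ℓ w' + 1 := by
      rcases cs.length_simple_mul w' j with h | h <;> omega
    have hfix : w' * t * w'⁻¹ ≠ s j := by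
      intro h
      have : s j * w' * t = w' := by
        rw [(conj_eq_iff_eq_conj (inv_mul_cancel w')).mp h]
        simp [mul_assoc, cs.simple_mul_simple_cancel_left]
      rw [this] at hlt
      omega
    have hlt' : ℓ w' < ℓ (w' * t) := by
      have := cs.length_simple_mul (w' * t) j
      rw [← mul_assoc] at this
      omega
    rw [inversionSign_mul, inversionSign_simple, if_neg hfix, one_mul]
    exact ih _ (by omega) hlt' rfl

theorem inversionSign_eq_neg_one {w t : W} (h : cs.IsRightInversion w t) :
    cs.inversionSign w t = -1 := by
  have hwt : cs.inversionSign (w * t) t = 1 :=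
    cs.inversionSign_eq_one_of_length_lt (by rw [mul_assoc, h.1.mul_self, mul_one]; exact h.2)
  simpa [hwt, mul_assoc, h.1.mul_self] using cs.inversionSign_mul_self (w * t) h.1

/-- The strong exchange property. -/
theorem mem_rightInvSeq_of_isRightInversion {ω : List B} {t : W}
    (h : cs.IsRightInversion (π ω) t) : t ∈ ris ω := by
  have hsign := cs.inversionSign_eq_neg_one h
  rw [inversionSign_wordProd] at hsign
  by_contra hmem
  rw [List.count_eq_zero_of_not_mem hmem, pow_zero] at hsign
  exact absurd hsign (by decide)

theorem exists_wordProd_eraseIdx_eq_mul {ω : List B} {t : W}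
    (h : cs.IsRightInversion (π ω) t) : ∃ j, π (ω.eraseIdx j) = π ω * t := by
  obtain ⟨j, hj, rfl⟩ := List.getElem_of_mem (cs.mem_rightInvSeq_of_isRightInversion h)
  exact ⟨j, by rw [← wordProd_mul_getD_rightInvSeq, List.getD_eq_getElem]⟩

def BruhatStep (x y : W) : Prop := ∃ t, cs.IsReflection t ∧ x * t = y ∧ ℓ x < ℓ y

def BruhatLE (u v : W) : Prop := Relation.ReflTransGen cs.BruhatStep u v

variable {cs}

theorem bruhatStep_mul_simple {w : W} {i : B} (h : ¬cs.IsRightDescent w i) :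
    cs.BruhatStep w (w * s i) :=
  ⟨s i, cs.isReflection_simple i, rfl, by rw [cs.not_isRightDescent_iff.mp h]; omega⟩

theorem bruhatStep_mul_simple_of_isRightDescent {w : W} {i : B} (h : cs.IsRightDescent w i) :
    cs.BruhatStep (w * s i) w :=
  ⟨s i, cs.isReflection_simple i, cs.simple_mul_simple_cancel_right i, h⟩

theorem BruhatStep.mul_simple_eq_or {u w : W} (h : cs.BruhatStep u w) (i : B) :
    u * s i = w ∨ cs.BruhatStep (u * s i) (w * s i) := by
  obtain ⟨t, ht, rfl, hlt⟩ := h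
  obtain ⟨m, hm, hmprod⟩ := cs.exists_isReduced (u * t * s i)
  -- `m ++ [i]` is a word for `u t`, reduced or not, so `t` occurs in its inversion sequence
  have hinv : cs.IsRightInversion (π (m.concat i)) t := by
    rw [wordProd_concat, ← hmprod, cs.simple_mul_simple_cancel_right]
    exact ⟨ht, by rwa [mul_assoc, ht.mul_self, mul_one]⟩
  have hmem := cs.mem_rightInvSeq_of_isRightInversion hinv
  rw [rightInvSeq_concat, List.concat_eq_append, List.mem_append, List.mem_singleton,
    List.mem_map] at hmem
  rcases hmem with ⟨t', ht', rfl⟩ | rfl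
  · have hswap : u * s i * t' = u * MulAut.conj (s i) t' * s i := by
      simp [mul_assoc, cs.inv_simple]
    obtain ⟨ht'refl, hlen⟩ := cs.isRightInversion_of_mem_rightInvSeq hm ht'
    rw [← hmprod, ← hswap, mul_assoc (u * s i), ht'refl.mul_self, mul_one] at hlen
    exact Or.inr ⟨t', ht'refl, hswap, hswap ▸ hlen⟩
  · exact Or.inl rfl

theorem BruhatLE.mul_simple_or {u w : W} (h : cs.BruhatLE u w) (i : B) :
    cs.BruhatLE (u * s i) w ∨ cs.BruhatLE (u * s i) (w * s i) := by
  induction h using Relation.ReflTransGen.head_induction_on with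
  | refl => exact Or.inr .refl
  | head hstep hchain ih =>
    rcases hstep.mul_simple_eq_or i with heq | hstep'
    · rw [heq]
      exact Or.inl hchain
    · exact ih.imp (.head hstep') (.head hstep')

theorem BruhatLE.le_mul_simple_or {u w : W} (h : cs.BruhatLE u w) (i : B) :
    cs.BruhatLE u (w * s i) ∨ cs.BruhatLE (u * s i) (w * s i) := by
  induction h with
  | refl => exact Or.inr .refl
  | tail hchain hstep ih =>
    rcases hstep.mul_simple_eq_or i with rfl | hstep'
    · rw [cs.simple_mul_simple_cancel_right]
      exact Or.inl hchain
    · exact ih.imp (.tail · hstep') (.tail · hstep')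

theorem bruhatLE_wordProd_of_sublist {l l' : List B} (hl : cs.IsReduced l) (h : l'.Sublist l) :
    cs.BruhatLE (π l') (π l) := by
  induction l using List.reverseRecOn generalizing l' with
  | nil =>
    rw [List.sublist_nil.mp h]
    exact .refl
  | append_singleton l₀ i ih =>
    have hl₀ : cs.IsReduced l₀ := by simpa using hl.take l₀.length
    have hasc : ¬cs.IsRightDescent (π l₀) i := by
      have hlen : ℓ (π l₀ * s i) = l₀.length + 1 := by
        simpa [wordProd_append] using hl.eq
      rw [IsRightDescent, hlen]
      have := cs.length_wordProd_le l₀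
      omega
    rw [wordProd_append, wordProd_singleton]
    obtain ⟨r, r', rfl, hr, hr'⟩ := List.sublist_append_iff.mp h
    rcases List.sublist_singleton.mp hr' with rfl | rfl
    · rw [List.append_nil]
      exact (ih hl₀ hr).tail (bruhatStep_mul_simple hasc)
    · rw [wordProd_append, wordProd_singleton]
      exact ((ih hl₀ hr).mul_simple_or i).elim (.tail · (bruhatStep_mul_simple hasc)) id

theorem BruhatLE.exists_sublist {u v : W} (h : cs.BruhatLE u v) {ω : List B} (hω : π ω = v) :
    ∃ ω' : List B, ω'.Sublist ω ∧ π ω' = u := by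
  induction h generalizing ω with
  | refl => exact ⟨ω, .refl ω, hω⟩
  | tail _ hstep ih =>
    obtain ⟨t, ht, rfl, hlt⟩ := hstep
    have hinv : cs.IsRightInversion (π ω) t :=
      ⟨ht, by rwa [hω, mul_assoc, ht.mul_self, mul_one]⟩
    obtain ⟨j, hj⟩ := cs.exists_wordProd_eraseIdx_eq_mul hinv
    rw [hω, mul_assoc, ht.mul_self, mul_one] at hj
    obtain ⟨ω', hsub, hprod⟩ := ih hj
    exact ⟨ω', hsub.trans (ω.eraseIdx_sublist j), hprod⟩

end CoxeterSystem

open CoxeterSystem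

theorem leB_iff_bruhatLE {B W : Type*} [Group W] {M : CoxeterMatrix B} (cs : CoxeterSystem M W)
    {u v : W} : leB cs u v ↔ cs.BruhatLE u v := by
  constructor
  · rintro ⟨l, hl, rfl, l', hsub, rfl⟩
    exact bruhatLE_wordProd_of_sublist hl hsub
  · intro h
    obtain ⟨ω, hω, rfl⟩ := cs.exists_isReduced v
    obtain ⟨ω', hsub, hprod⟩ := h.exists_sublist rfl
    exact ⟨ω, hω, rfl, ω', hsub, hprod⟩

section BubbleOperators

variable {B W : Type*} [Group W] {M : CoxeterMatrix B} (cs : CoxeterSystem M W)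

theorem piOp_eq_or (i : B) (w : W) : piOp cs i w = w ∨ piOp cs i w = w * cs.simple i := by
  unfold piOp
  split_ifs <;> simp

theorem bruhatLE_piOp (i : B) (w : W) : cs.BruhatLE w (piOp cs i w) := by
  unfold piOp
  split_ifs with h
  · exact .refl
  · exact .single (bruhatStep_mul_simple h)

theorem mul_simple_bruhatLE_piOp (i : B) (w : W) :
    cs.BruhatLE (w * cs.simple i) (piOp cs i w) := by
  unfold piOp
  split_ifs with h
  · exact .single (bruhatStep_mul_simple_of_isRightDescent h)
  · exact .refl

theorem pibOp_eq_or (i : B) (w : W) : pibOp cs i w = w ∨ pibOp cs i w = w * cs.simple i := by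
  unfold pibOp
  split_ifs <;> simp

theorem pibOp_bruhatLE (i : B) (w : W) : cs.BruhatLE (pibOp cs i w) w := by
  unfold pibOp
  split_ifs with h
  · exact .single (bruhatStep_mul_simple_of_isRightDescent h)
  · exact .refl

theorem pibOp_bruhatLE_mul_simple (i : B) (w : W) :
    cs.BruhatLE (pibOp cs i w) (w * cs.simple i) := by
  unfold pibOp
  split_ifs with h
  · exact .refl
  · exact .single (bruhatStep_mul_simple h)

variable {cs}

theorem piOp_mono (i : B) {u v : W} (h : cs.BruhatLE u v) :
    cs.BruhatLE (piOp cs i u) (piOp cs i v) := by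
  rcases piOp_eq_or cs i u with hu | hu <;> rw [hu]
  · exact h.trans (bruhatLE_piOp cs i v)
  · exact (h.mul_simple_or i).elim (·.trans (bruhatLE_piOp cs i v))
      (·.trans (mul_simple_bruhatLE_piOp cs i v))

theorem pibOp_mono (i : B) {u v : W} (h : cs.BruhatLE u v) :
    cs.BruhatLE (pibOp cs i u) (pibOp cs i v) := by
  rcases pibOp_eq_or cs i v with hv | hv <;> rw [hv]
  · exact (pibOp_bruhatLE cs i u).trans h
  · exact (h.le_mul_simple_or i).elim (pibOp_bruhatLE cs i u).trans
      (pibOp_bruhatLE_mul_simple cs i u).trans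

end BubbleOperators

theorem biHecke_preserves_bruhatOrder_general {B W : Type*} [Group W] {M : CoxeterMatrix B}
    (cs : CoxeterSystem M W) (f : Function.End W) (hf : f ∈ biHecke cs)
    (u v : W) (huv : leB cs u v) : leB cs (f u) (f v) := by
  rw [leB_iff_bruhatLE] at huv ⊢
  induction hf using Submonoid.closure_induction generalizing u v with
  | mem g hg =>
    rcases hg with ⟨i, rfl⟩ | ⟨i, rfl⟩
    · exact piOp_mono i huv
    · exact pibOp_mono i huv
  | one => exact huv
  | mul g h _ _ ihg ihh => exact ihg _ _ (ihh _ _ huv)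

/-- Every element of the biHecke monoid preserves Bruhat order. -/
theorem biHecke_preserves_bruhatOrder {B W : Type*} [Group W] [Finite W] {M : CoxeterMatrix B}
    (cs : CoxeterSystem M W) (f : Function.End W) (hf : f ∈ biHecke cs)
    (u v : W) (huv : leB cs u v) : leB cs (f u) (f v) :=
  biHecke_preserves_bruhatOrder_general cs f hf u v huv
end

section
/- For any element f of the biHecke monoid of a finite Coxeter group W, any w ∈ W, and any simple reflection s_j, the element (s_j w)·f equals either w·f or s_j (w·f). -/
open scoped Classical

namespace BiHeckeAux

open CoxeterSystem List

variable {B W : Type*} [Group W] {M : CoxeterMatrix B} (cs : CoxeterSystem M W)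

local prefix:100 "s" => cs.simple
local prefix:100 "ℓ" => cs.length
local prefix:100 "π" => cs.wordProd
local prefix:100 "lis" => cs.leftInvSeq

/-- The sign function at `g`. -/
noncomputable def chi (g : W) : W → ℤˣ := fun t => if t = g then -1 else 1

theorem chi_mul_self (g : W) : chi g * chi g = 1 := by
  funext t
  simp only [chi, Pi.mul_apply, Pi.one_apply]
  split <;> simp

/-- Conjugation action of `W` on `W → ℤˣ`. -/
noncomputable def conjAut : W →* MulAut (W → ℤˣ) where
  toFun w :=
    { toFun := fun χ t => χ (w⁻¹ * t * w)
      invFun := fun χ t => χ (w * t * w⁻¹)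
      left_inv := fun χ => by funext t; group
      right_inv := fun χ => by funext t; group
      map_mul' := fun χ χ' => rfl }
  map_one' := by ext χ t; simp
  map_mul' u v := by ext χ t; simp [mul_assoc]

theorem conjAut_apply (w : W) (χ : W → ℤˣ) (t : W) :
    conjAut (W := W) w χ t = χ (w⁻¹ * t * w) := rfl

theorem conjAut_chi (w g : W) : conjAut (W := W) w (chi g) = chi (w * g * w⁻¹) := by
  funext t
  simp only [conjAut_apply, chi]
  congr 1
  simp only [eq_iff_iff]
  constructor
  · intro h; rw [← h]; group
  · intro h; rw [h]; group

noncomputable abbrev SD (W : Type*) [Group W] := SemidirectProduct (W → ℤˣ) W (conjAut)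

theorem sd_pow (z : SD W) (n : ℕ) :
    z ^ n = ⟨∏ k ∈ Finset.range n, conjAut (z.right ^ k) z.left, z.right ^ n⟩ := by
  induction n with
  | zero =>
    ext
    · simp
    · simp
  | succ n ih =>
    rw [pow_succ, ih]
    ext
    · rw [SemidirectProduct.mul_left, Finset.prod_range_succ]
    · rw [SemidirectProduct.mul_right, pow_succ]

theorem simple_mul_pow_inv (i j : B) (k : ℕ) :
    s i * ((s i * s j) ^ k)⁻¹ = (s i * s j) ^ k * s i := by
  have key : s i * (s i * s j)⁻¹ = (s i * s j) * s i := by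
    rw [mul_inv_rev, cs.inv_simple, cs.inv_simple, ← mul_assoc]
  induction k with
  | zero => simp
  | succ k ih =>
    rw [pow_succ, mul_inv_rev, ← mul_assoc, key, mul_assoc, ih, ← mul_assoc, ← pow_succ', ← pow_succ]

theorem conj_pow_simple (i j : B) (k : ℕ) :
    (s i * s j) ^ k * s i * ((s i * s j) ^ k)⁻¹ = (s i * s j) ^ (2 * k) * s i := by
  rw [mul_assoc, simple_mul_pow_inv cs i j k, ← mul_assoc, ← pow_add, two_mul]

theorem conj_pow_simple' (i j : B) (k : ℕ) :
    (s i * s j) ^ k * (s i * s j * s i) * ((s i * s j) ^ k)⁻¹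
      = (s i * s j) ^ (2 * k + 1) * s i := by
  rw [← mul_assoc ((s i * s j) ^ k), ← pow_succ, mul_assoc, simple_mul_pow_inv cs i j k,
    ← mul_assoc, ← pow_add]
  congr 2
  omega

/-- The generators of the Tits representation. -/
noncomputable def tgen (i : B) : SD W := ⟨chi (s i), s i⟩

theorem tgen_liftable : CoxeterMatrix.IsLiftable M (tgen cs) := by
  intro i j
  have hpm : (s i * s j) ^ M i j = 1 := cs.simple_mul_simple_pow i j
  have hright : (tgen cs i * tgen cs j).right = s i * s j := rfl
  have hleft : (tgen cs i * tgen cs j).left = chi (s i) * chi (s i * s j * s i) := by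
    show chi (s i) * conjAut (s i) (chi (s j)) = _
    rw [conjAut_chi, cs.inv_simple]
  rw [sd_pow, hright, hleft, hpm]
  have hconj : ∀ k : ℕ, conjAut ((s i * s j) ^ k) (chi (s i) * chi (s i * s j * s i))
      = chi ((s i * s j) ^ (2 * k) * s i) * chi ((s i * s j) ^ (2 * k + 1) * s i) := by
    intro k
    rw [map_mul, conjAut_chi, conjAut_chi, conj_pow_simple cs i j k, conj_pow_simple' cs i j k]
  have hsplit : ∀ n : ℕ, ∏ k ∈ Finset.range n,
      (chi ((s i * s j) ^ (2 * k) * s i) * chi ((s i * s j) ^ (2 * k + 1) * s i))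
      = ∏ e ∈ Finset.range (2 * n), chi ((s i * s j) ^ e * s i) := by
    intro n
    induction n with
    | zero => simp
    | succ n ih =>
      rw [Finset.prod_range_succ, ih, mul_add, mul_one, Finset.prod_range_succ,
        Finset.prod_range_succ, ← mul_assoc]
  have hone : ∏ e ∈ Finset.range (2 * M i j), chi ((s i * s j) ^ e * s i) = 1 := by
    rw [two_mul, Finset.prod_range_add]
    simp only [pow_add, hpm, one_mul]
    rw [← Finset.prod_mul_distrib]
    simp only [chi_mul_self]
    simp
  rw [Finset.prod_congr rfl (fun k _ => hconj k), hsplit, hone]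
  rfl

/-- The Tits representation. -/
noncomputable def titsRep : W →* SD W := cs.lift ⟨tgen cs, tgen_liftable cs⟩

theorem titsRep_simple (i : B) : titsRep cs (s i) = tgen cs i :=
  cs.lift_apply_simple (tgen_liftable cs) i

theorem titsRep_right (w : W) : (titsRep cs w).right = w := by
  have : SemidirectProduct.rightHom.comp (titsRep cs) = MonoidHom.id W := by
    apply cs.ext_simple
    intro i
    simp [titsRep_simple]
    rfl
  exact DFunLike.congr_fun this w

/-- The sign cocycle. -/
noncomputable def nn (w : W) : W → ℤˣ := (titsRep cs w).left

theorem nn_mul (u v : W) (t : W) : nn cs (u * v) t = nn cs u t * nn cs v (u⁻¹ * t * u) := by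
  unfold nn
  rw [map_mul, SemidirectProduct.mul_left, titsRep_right]
  rfl

theorem nn_simple (i : B) : nn cs (s i) = chi (s i) := by
  unfold nn
  rw [titsRep_simple]
  rfl

theorem nn_one (t : W) : nn cs 1 t = 1 := by
  unfold nn
  rw [map_one]
  rfl

theorem nn_eq_one_of_not_mem (ω : List B) (t : W) (h : t ∉ lis ω) : nn cs (π ω) t = 1 := by
  induction ω generalizing t with
  | nil => simpa using nn_one cs t
  | cons i ω ih =>
    rw [show cs.leftInvSeq (i :: ω)
        = s i :: List.map (MulAut.conj (s i)) (cs.leftInvSeq ω) from rfl] at h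
    simp only [List.mem_cons, List.mem_map, not_or, not_exists, not_and] at h
    obtain ⟨h1, h2⟩ := h
    rw [cs.wordProd_cons, nn_mul, nn_simple, cs.inv_simple]
    have : chi (s i) t = 1 := by simp [chi, h1]
    rw [this, one_mul]
    apply ih
    intro hmem
    exact h2 _ hmem (by simp [MulAut.conj, mul_assoc])

theorem length_lt_of_nn_eq_neg_one (w t : W) (h : nn cs w t = -1) : ℓ (t * w) < ℓ w := by
  obtain ⟨ω, hred, rfl⟩ := cs.exists_reduced_word' w
  have hmem : t ∈ lis ω := by
    by_contra hc
    rw [nn_eq_one_of_not_mem cs ω t hc] at h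
    exact absurd h (by decide)
  exact (cs.isLeftInversion_of_mem_leftInvSeq hred hmem).2

theorem mem_lis_of_length_lt (w : W) (j : B) (h : ℓ (s j * w) < ℓ w)
    (ω : List B) (hω : π ω = w) : s j ∈ lis ω := by
  by_contra hc
  have h1 : nn cs w (s j) = 1 := by rw [← hω]; exact nn_eq_one_of_not_mem cs ω _ hc
  have h2 : nn cs (s j * w) (s j) = -1 := by
    rw [nn_mul, nn_simple, cs.inv_simple]
    have e1 : chi (s j) (s j) = -1 := by simp [chi]
    have e2 : s j * s j * s j = s j := by
      rw [cs.simple_mul_simple_self, one_mul]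
    rw [e1, e2, h1, mul_one]
  have := length_lt_of_nn_eq_neg_one cs (s j * w) (s j) h2
  rw [← mul_assoc, cs.simple_mul_simple_self, one_mul] at this
  omega

/-- Simple-reflection strong exchange. -/
theorem exchange (w : W) (j : B) (h : ℓ (s j * w) < ℓ w)
    (ω : List B) (hω : π ω = w) :
    ∃ k < ω.length, s j * w = π (ω.eraseIdx k) := by
  have hmem := mem_lis_of_length_lt cs w j h ω hω
  obtain ⟨k, hk, hget⟩ := List.mem_iff_getElem.mp hmem
  rw [cs.length_leftInvSeq] at hk
  refine ⟨k, hk, ?_⟩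
  have := cs.getD_leftInvSeq_mul_wordProd ω k
  rw [List.getD_eq_getElem _ 1 (by rwa [cs.length_leftInvSeq]), hget, hω] at this
  exact this

/-- The lifting lemma. -/
theorem lifting (w : W) (i j : B)
    (h1 : ℓ (w * s i) = ℓ w + 1)
    (h2 : ℓ (s j * (w * s i)) < ℓ (w * s i))
    (h3 : ℓ w ≤ ℓ (s j * w)) :
    s j * w = w * s i := by
  obtain ⟨ω, hlen, hw⟩ : ∃ ω : List B, ℓ w = ω.length ∧ π ω = w := by
    obtain ⟨ω, hω, rfl⟩ := cs.exists_isReduced w; exact ⟨ω, hω, rfl⟩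
  have hπ : π (ω ++ [i]) = w * s i := by
    rw [cs.wordProd_append, cs.wordProd_singleton, hw]
  obtain ⟨k, hk, hke⟩ := exchange cs (w * s i) j h2 (ω ++ [i]) hπ
  rw [List.length_append, List.length_singleton] at hk
  rcases lt_or_ge k ω.length with hlt | hge
  · exfalso
    rw [List.eraseIdx_append_of_lt_length hlt] at hke
    rw [cs.wordProd_append, cs.wordProd_singleton] at hke
    have hjw : s j * w = π (ω.eraseIdx k) := by
      have h := congrArg (fun x => x * s i) hke
      simpa [mul_assoc, cs.simple_mul_simple_self] using h
    have hle : ℓ (s j * w) ≤ (ω.eraseIdx k).length := by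
      rw [hjw]; exact cs.length_wordProd_le _
    have hlenerase : (ω.eraseIdx k).length + 1 = ω.length := List.length_eraseIdx_add_one hlt
    omega
  · have hk' : k = ω.length := by omega
    rw [hk', List.eraseIdx_append_of_length_le (le_refl _)] at hke
    simp only [Nat.sub_self, List.eraseIdx_cons_zero, List.append_nil] at hke
    rw [← hw] at hke
    have h := congrArg (fun x => x * s i) hke
    simpa [mul_assoc, cs.simple_mul_simple_self, hw] using h

/-- If left multiplication by `s j` changes the right-descent status at `i`,
then `s j * w = w * s i`. -/
theorem cross (w : W) (i j : B)
    (hne : ¬(cs.IsRightDescent (s j * w) i ↔ cs.IsRightDescent w i)) :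
    s j * w = w * s i := by
  by_cases h1 : cs.IsRightDescent w i
  · -- `w` has the descent, `s j * w` does not
    have h2 : ¬cs.IsRightDescent (s j * w) i := fun h => hne (iff_of_true h h1)
    have hws : ℓ (w * s i) + 1 = ℓ w := cs.isRightDescent_iff.mp h1
    have hnd : ℓ (s j * w * s i) = ℓ (s j * w) + 1 := cs.not_isRightDescent_iff.mp h2
    have hassoc : s j * w * s i = s j * (w * s i) := by rw [mul_assoc]
    have hjw : ℓ (s j * w) + 1 = ℓ w := by
      rcases cs.length_simple_mul w j with hA | hA
      · exfalso
        have hc := cs.length_mul_le (s j) (w * s i)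
        rw [cs.length_simple, ← hassoc] at hc
        omega
      · exact hA
    have hA : ℓ (w * s i * s i) = ℓ (w * s i) + 1 := by
      rw [cs.simple_mul_simple_cancel_right]
      omega
    have hB : ℓ (s j * (w * s i * s i)) < ℓ (w * s i * s i) := by
      rw [cs.simple_mul_simple_cancel_right]
      omega
    have hC : ℓ (w * s i) ≤ ℓ (s j * (w * s i)) := by
      rw [← hassoc]
      omega
    have key := lifting cs (w * s i) i j hA hB hC
    have h := congrArg (fun x => x * s i) key
    simpa [mul_assoc, cs.simple_mul_simple_self] using h
  · -- `s j * w` has the descent, `w` does not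
    have h2 : cs.IsRightDescent (s j * w) i := by
      by_contra hc
      exact hne (iff_of_false hc h1)
    have hws : ℓ (w * s i) = ℓ w + 1 := cs.not_isRightDescent_iff.mp h1
    have hd : ℓ (s j * w * s i) + 1 = ℓ (s j * w) := cs.isRightDescent_iff.mp h2
    have hassoc : s j * w * s i = s j * (w * s i) := by rw [mul_assoc]
    have hjw : ℓ (s j * w) = ℓ w + 1 := by
      rcases cs.length_simple_mul w j with hA | hA
      · exact hA
      · exfalso
        have hc := cs.length_mul_ge_length_sub_length' (s j) (w * s i)
        rw [cs.length_simple, ← hassoc] at hc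
        omega
    have hB : ℓ (s j * (w * s i)) < ℓ (w * s i) := by
      rw [← hassoc]
      omega
    exact lifting cs w i j hws hB (by omega)

theorem piOp_step (i j : B) (w : W) :
    piOp cs i (s j * w) = piOp cs i w ∨ piOp cs i (s j * w) = s j * piOp cs i w := by
  unfold piOp
  by_cases h1 : cs.IsRightDescent w i <;> by_cases h2 : cs.IsRightDescent (s j * w) i
  · right
    rw [if_pos h2, if_pos h1]
  · left
    rw [if_neg h2, if_pos h1, cross cs w i j (fun h => h2 (h.mpr h1)), mul_assoc,
      cs.simple_mul_simple_self, mul_one]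
  · left
    rw [if_pos h2, if_neg h1]
    exact cross cs w i j (fun h => h1 (h.mp h2))
  · right
    rw [if_neg h2, if_neg h1, mul_assoc]

theorem pibOp_step (i j : B) (w : W) :
    pibOp cs i (s j * w) = pibOp cs i w ∨ pibOp cs i (s j * w) = s j * pibOp cs i w := by
  unfold pibOp
  by_cases h1 : cs.IsRightDescent w i <;> by_cases h2 : cs.IsRightDescent (s j * w) i
  · right
    rw [if_pos h2, if_pos h1, mul_assoc]
  · left
    rw [if_neg h2, if_pos h1]
    exact cross cs w i j (fun h => h2 (h.mpr h1))
  · left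
    rw [if_pos h2, if_neg h1, cross cs w i j (fun h => h1 (h.mp h2)), mul_assoc,
      cs.simple_mul_simple_self, mul_one]
  · right
    rw [if_neg h2, if_neg h1]

end BiHeckeAux

/-- For `f` in the biHecke monoid, `(s_j w)·f` is either `w·f` or `s_j (w·f)`. -/
theorem biHecke_simple_mul {B W : Type*} [Group W] [Finite W] {M : CoxeterMatrix B}
    (cs : CoxeterSystem M W) (f : Function.End W) (hf : f ∈ biHecke cs)
    (w : W) (j : B) :
    f (cs.simple j * w) = f w ∨ f (cs.simple j * w) = cs.simple j * f w := by
  have key : ∀ v : W, f (cs.simple j * v) = f v ∨ f (cs.simple j * v) = cs.simple j * f v := by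
    refine Submonoid.closure_induction
      (motive := fun x _ => ∀ v : W,
        x (cs.simple j * v) = x v ∨ x (cs.simple j * v) = cs.simple j * x v)
      ?_ ?_ ?_ hf
    · rintro x (⟨i, rfl⟩ | ⟨i, rfl⟩)
      · exact fun v => BiHeckeAux.piOp_step cs i j v
      · exact fun v => BiHeckeAux.pibOp_step cs i j v
    · intro v
      right
      rfl
    · intro x y hx hy px py v
      show x (y (cs.simple j * v)) = x (y v) ∨ x (y (cs.simple j * v)) = cs.simple j * x (y v)
      rcases py v with h | h
      · left
        rw [h]
      · rw [h]
        exact px (y v)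
  exact key w
end

section
/- The image set of any idempotent in the biHecke monoid of a finite Coxeter group is an interval in left weak order. -/
open scoped Classical

/-!
Every element `f` of the biHecke monoid sends each cover `u ⋖ s_j u` of left weak order either to
a single point or to the cover `f u ⋖ s_j (f u)` carrying the same label: for the generators `π_i`
and `π̄_i` this is a case analysis on the right descents of `u` and `s_j u`, and the property is
stable under composition. Consequently `f` is monotone for `≤_L`, and along `u ≤_L v` the length
gap `ℓ v - ℓ u` can only shrink, staying the same only when `f v (f u)⁻¹ = v u⁻¹`. For idempotent
`f` the image is the fixed-point set, which lies in `[f 1, f w₀]`; conversely a point `x` of that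
interval is fixed, because comparing it with both fixed endpoints forces the gap from `f 1` to be
preserved.

The exchange-type fact behind the case analysis (a left descent `s_j` and a right descent `s_i`
of `w` satisfy `s_j w = w s_i` or lower the length by two) comes from Tits' sign cocycle:
the permutations `σ_a (t, ε) = (a t a⁻¹, ε + [t = a])` of `W × ZMod 2` satisfy the Coxeter
relations for `a = s_i`, and the second coordinate of the lifted action of `w` records the parity
of the number of occurrences of `t` in the right inversion sequence of any word for `w`.
-/

section SignFlip

variable {G : Type*} [Group G]

noncomputable def signFlip (a : G) : Equiv.Perm (G × ZMod 2) where
  toFun p := (a * p.1 * a⁻¹, p.2 + if p.1 = a then 1 else 0)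
  invFun p := (a⁻¹ * p.1 * a, p.2 + if p.1 = a then 1 else 0)
  left_inv p := by
    have : a * p.1 * a⁻¹ = a ↔ p.1 = a := by rw [mul_inv_eq_iff_eq_mul, mul_right_inj]
    dsimp only
    rw [this, add_assoc, CharTwo.add_self_eq_zero]
    simp [mul_assoc]
  right_inv p := by
    have : a⁻¹ * p.1 * a = a ↔ p.1 = a := by rw [mul_eq_right, inv_mul_eq_one, eq_comm]
    dsimp only
    rw [this, add_assoc, CharTwo.add_self_eq_zero]
    simp [mul_assoc]

theorem signFlip_apply (a t : G) (ε : ZMod 2) :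
    signFlip a (t, ε) = (a * t * a⁻¹, ε + if t = a then 1 else 0) := rfl

theorem signFlip_mul_pow_apply {a b : G} (ha : a⁻¹ = a) (hb : b⁻¹ = b) (n : ℕ) (t : G)
    (ε : ZMod 2) :
    ((signFlip a * signFlip b) ^ n) (t, ε) = ((a * b) ^ n * t * ((a * b) ^ n)⁻¹,
      ε + ∑ r ∈ Finset.range (2 * n), if t = b * (a * b) ^ r then 1 else 0) := by
  set p := a * b with hp
  have hbp : b * p * b⁻¹ = p⁻¹ := by
    rw [hp, mul_inv_rev]
    conv_rhs => rw [ha, hb]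
    group
  have hconj : ∀ k : ℕ, (p ^ k)⁻¹ * b = b * p ^ k := by
    intro k
    have := map_pow (MulAut.conj b) p k
    simp only [MulAut.conj_apply, hbp, inv_pow] at this
    rw [← this]; group
  induction n with
  | zero => simp
  | succ n ih =>
    rw [pow_succ', Equiv.Perm.mul_apply, ih, Equiv.Perm.mul_apply, signFlip_apply, signFlip_apply]
    have hmove : ∀ k, p ^ n * t * (p ^ n)⁻¹ = b * p ^ k ↔ t = b * p ^ (2 * n + k) := by
      intro k
      rw [mul_inv_eq_iff_eq_mul, ← eq_inv_mul_iff_mul_eq, ← mul_assoc, ← mul_assoc, hconj,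
        mul_assoc, mul_assoc, ← pow_add, ← pow_add]
      ring_nf
    have h1 : p ^ n * t * (p ^ n)⁻¹ = b ↔ t = b * p ^ (2 * n) := by
      simpa using hmove 0
    have h2 : b * (p ^ n * t * (p ^ n)⁻¹) * b⁻¹ = a ↔ t = b * p ^ (2 * n + 1) := by
      rw [mul_inv_eq_iff_eq_mul, ← eq_inv_mul_iff_mul_eq, hb, ← hp]
      simpa using hmove 1
    simp only [h1, h2, Finset.sum_range_succ, show 2 * (n + 1) = 2 * n + 1 + 1 by ring]
    refine Prod.ext ?_ ?_
    · show a * (b * (p ^ n * t * (p ^ n)⁻¹) * b⁻¹) * a⁻¹ = p ^ (n + 1) * t * (p ^ (n + 1))⁻¹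
      rw [pow_succ', mul_inv_rev, hp, mul_inv_rev]
      group
    · ring

theorem signFlip_mul_pow_eq_one {a b : G} (ha : a⁻¹ = a) (hb : b⁻¹ = b) {m : ℕ}
    (hm : (a * b) ^ m = 1) : (signFlip a * signFlip b) ^ m = 1 := by
  ext ⟨t, ε⟩ : 1
  have hperiod : ∀ r, b * (a * b) ^ (m + r) = b * (a * b) ^ r := by simp [pow_add, hm]
  rw [signFlip_mul_pow_apply ha hb, two_mul, Finset.sum_range_add]
  simp [hperiod, hm, CharTwo.add_self_eq_zero]

end SignFlip

section CoxeterSystem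

variable {B W : Type*} [Group W] {M : CoxeterMatrix B} (cs : CoxeterSystem M W)

noncomputable def signRep : W →* Equiv.Perm (W × ZMod 2) :=
  cs.lift ⟨fun i => signFlip (cs.simple i), fun i i' =>
    signFlip_mul_pow_eq_one (cs.inv_simple i) (cs.inv_simple i') (cs.simple_mul_simple_pow i i')⟩

theorem signRep_simple (i : B) : signRep cs (cs.simple i) = signFlip (cs.simple i) :=
  cs.lift_apply_simple _ i

noncomputable def inversionParity (w t : W) : ZMod 2 := (signRep cs w (t, 0)).2

theorem signRep_apply (w t : W) (ε : ZMod 2) :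
    signRep cs w (t, ε) = (w * t * w⁻¹, ε + inversionParity cs w t) := by
  induction w using cs.simple_induction_left generalizing t ε with
  | one => simp [inversionParity]
  | mul_simple_left w i ih =>
    rw [inversionParity, map_mul, Equiv.Perm.mul_apply, Equiv.Perm.mul_apply, ih, ih,
      signRep_simple, signFlip_apply, signFlip_apply, zero_add, add_assoc, mul_inv_rev]
    congr 1
    group

theorem inversionParity_mul (u v t : W) :
    inversionParity cs (u * v) t = inversionParity cs v t + inversionParity cs u (v * t * v⁻¹) := by
  rw [inversionParity, map_mul, Equiv.Perm.mul_apply, signRep_apply, signRep_apply, zero_add]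

theorem inversionParity_simple (i : B) (t : W) :
    inversionParity cs (cs.simple i) t = if t = cs.simple i then 1 else 0 := by
  simp [inversionParity, signRep_simple, signFlip_apply]

theorem inversionParity_wordProd (ω : List B) (t : W) :
    inversionParity cs (cs.wordProd ω) t = (cs.rightInvSeq ω).count t := by
  induction ω with
  | nil => simp [inversionParity]
  | cons i ω ih =>
    rw [cs.wordProd_cons, inversionParity_mul, ih, inversionParity_simple,
      CoxeterSystem.rightInvSeq, List.count_cons]
    have hconj : cs.wordProd ω * t * (cs.wordProd ω)⁻¹ = cs.simple i ↔
        (cs.wordProd ω)⁻¹ * cs.simple i * cs.wordProd ω = t := by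
      rw [mul_inv_eq_iff_eq_mul, ← eq_inv_mul_iff_mul_eq, mul_assoc, eq_comm]
    simp only [hconj, beq_iff_eq]
    push_cast
    rfl

theorem inversionParity_one (t : W) : inversionParity cs 1 t = 0 := by
  simp [inversionParity]

theorem inversionParity_self {t : W} (ht : cs.IsReflection t) : inversionParity cs t t = 1 := by
  obtain ⟨v, i, rfl⟩ := ht
  have hcancel := inversionParity_mul cs v v⁻¹ (v * cs.simple i * v⁻¹)
  rw [mul_inv_cancel, inversionParity_one] at hcancel
  rw [mul_assoc v, inversionParity_mul, inversionParity_mul, inversionParity_simple]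
  simp only [inv_inv, mul_assoc, inv_mul_cancel_left, mul_inv_cancel, inv_mul_cancel,
    mul_one, if_pos] at hcancel ⊢
  linear_combination -hcancel

theorem isRightInversion_of_inversionParity_eq_one {w t : W}
    (h : inversionParity cs w t = 1) : cs.IsRightInversion w t := by
  obtain ⟨ω, hω, rfl⟩ := cs.exists_isReduced w
  rw [inversionParity_wordProd] at h
  have hmem : t ∈ cs.rightInvSeq ω := by
    by_contra hnot
    simp [List.count_eq_zero_of_not_mem hnot] at h
  exact cs.isRightInversion_of_mem_rightInvSeq hω hmem

theorem inversionParity_eq_one_iff {t : W} (ht : cs.IsReflection t) (w : W) :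
    inversionParity cs w t = 1 ↔ cs.IsRightInversion w t := by
  refine ⟨isRightInversion_of_inversionParity_eq_one cs, fun hinv => ?_⟩
  obtain h0 | h1 : inversionParity cs w t = 0 ∨ inversionParity cs w t = 1 := by
    generalize inversionParity cs w t = x; revert x; decide
  · have : inversionParity cs (w * t) t = 1 := by
      rw [inversionParity_mul, inversionParity_self cs ht, mul_inv_cancel_right, h0, add_zero]
    exact absurd hinv (ht.isRightInversion_mul_left_iff.mp
      (isRightInversion_of_inversionParity_eq_one cs this))
  · exact h1

theorem simple_mul_eq_mul_simple_or_length_add_two_le {w : W} {i j : B}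
    (hj : cs.IsLeftDescent w j) (hi : cs.IsRightDescent w i) :
    cs.simple j * w = w * cs.simple i ∨
      cs.length (cs.simple j * w * cs.simple i) + 2 ≤ cs.length w := by
  set t := w⁻¹ * cs.simple j * w with ht_def
  have hwt : w * t = cs.simple j * w := by rw [ht_def]; group
  by_cases hts : t = cs.simple i
  · exact Or.inl (by rw [← hwt, hts])
  right
  have ht : cs.IsReflection t := by
    simpa using (cs.isReflection_simple j).conj w⁻¹
  have hinv : inversionParity cs w t = 1 :=
    (inversionParity_eq_one_iff cs ht w).mpr ⟨ht, by rw [hwt]; exact hj⟩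
  have ht' : cs.IsReflection (cs.simple i * t * (cs.simple i)⁻¹) := ht.conj _
  have hinv' : inversionParity cs (w * cs.simple i) (cs.simple i * t * (cs.simple i)⁻¹) = 1 := by
    have h := inversionParity_mul cs (w * cs.simple i) (cs.simple i) t
    rwa [cs.simple_mul_simple_cancel_right, inversionParity_simple, if_neg hts, zero_add,
      hinv, eq_comm] at h
  have hlt := ((inversionParity_eq_one_iff cs ht' _).mp hinv').2
  have hprod : w * cs.simple i * (cs.simple i * t * (cs.simple i)⁻¹) =
      cs.simple j * w * cs.simple i := by
    rw [← hwt]; simp [mul_assoc]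
  rw [hprod] at hlt
  have := cs.isRightDescent_iff.mp hi
  omega

theorem inversionParity_simple_eq_one_iff (w : W) (i : B) :
    inversionParity cs w (cs.simple i) = 1 ↔ cs.IsRightDescent w i := by
  rw [inversionParity_eq_one_iff cs (cs.isReflection_simple i),
    cs.isRightInversion_simple_iff_isRightDescent]

theorem length_mul_add_length_of_forall_length_le {w₀ : W}
    (hmax : ∀ u, cs.length u ≤ cs.length w₀) (u : W) :
    cs.length (w₀ * u) + cs.length u = cs.length w₀ := by
  induction u using cs.simple_induction_right with
  | one => simp
  | mul_simple_right u i ih =>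
    have hw₀ : inversionParity cs w₀ (u * cs.simple i * u⁻¹) = 1 := by
      have ht := (cs.isReflection_simple i).conj u
      exact (inversionParity_eq_one_iff cs ht w₀).mpr
        ⟨ht, lt_of_le_of_ne (hmax _) (ht.length_mul_left_ne w₀)⟩
    have hdesc : cs.IsRightDescent (w₀ * u) i ↔ ¬ cs.IsRightDescent u i := by
      rw [← inversionParity_simple_eq_one_iff, ← inversionParity_simple_eq_one_iff,
        inversionParity_mul, hw₀]
      generalize inversionParity cs u (cs.simple i) = x
      revert x; decide
    rw [← mul_assoc]
    by_cases hu : cs.IsRightDescent u i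
    · have h1 := cs.isRightDescent_iff.mp hu
      have h2 := cs.not_isRightDescent_iff.mp fun h => hdesc.mp h hu
      omega
    · have h1 := cs.not_isRightDescent_iff.mp hu
      have h2 := cs.isRightDescent_iff.mp (hdesc.mpr hu)
      omega

theorem leL_refl (u : W) : leL cs u u := by simp [leL]

theorem one_leL (u : W) : leL cs 1 u := by simp [leL]

theorem leL_trans {u v w : W} (huv : leL cs u v) (hvw : leL cs v w) : leL cs u w := by
  unfold leL at *
  have h1 := cs.length_mul_le (w * v⁻¹) (v * u⁻¹)
  have h2 := cs.length_mul_le (w * u⁻¹) u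
  simp only [mul_assoc, inv_mul_cancel_left, inv_mul_cancel, mul_one] at h1 h2
  omega

theorem leL_simple_mul {u : W} {j : B} (h : cs.length (cs.simple j * u) = cs.length u + 1) :
    leL cs u (cs.simple j * u) := by
  simp [leL, h, add_comm]

theorem leL_of_forall_length_le {w₀ : W} (hmax : ∀ u, cs.length u ≤ cs.length w₀) (u : W) :
    leL cs u w₀ := by
  simpa [leL] using length_mul_add_length_of_forall_length_le cs hmax u⁻¹

theorem exists_simple_mul_leL {u v : W} (h : leL cs u v) (hne : u ≠ v) :
    ∃ j : B, cs.length (cs.simple j * u) = cs.length u + 1 ∧ leL cs (cs.simple j * u) v := by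
  have hz : v * u⁻¹ ≠ 1 := fun h1 => hne (mul_inv_eq_one.mp h1).symm
  obtain ⟨j, hj⟩ := cs.exists_rightDescent_of_ne_one hz
  have hzj := cs.isRightDescent_iff.mp hj
  have hsplit : v * u⁻¹ * cs.simple j * (cs.simple j * u) = v := by simp [mul_assoc]
  have h1 := cs.length_mul_le (v * u⁻¹ * cs.simple j) (cs.simple j * u)
  have h2 := cs.length_simple_mul u j
  rw [hsplit] at h1
  unfold leL at h
  have hup : cs.length (cs.simple j * u) = cs.length u + 1 := by omega
  refine ⟨j, hup, ?_⟩
  have : v * (cs.simple j * u)⁻¹ = v * u⁻¹ * cs.simple j := by simp [mul_assoc]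
  unfold leL
  rw [this]
  omega

theorem rightDescent_trichotomy {u : W} {j : B}
    (h : cs.length (cs.simple j * u) = cs.length u + 1) (i : B) :
    (cs.IsRightDescent u i ∧ cs.IsRightDescent (cs.simple j * u) i) ∨
      (¬ cs.IsRightDescent u i ∧ ¬ cs.IsRightDescent (cs.simple j * u) i) ∨
      (¬ cs.IsRightDescent u i ∧ cs.IsRightDescent (cs.simple j * u) i ∧
        cs.simple j * u = u * cs.simple i) := by
  by_cases hu : cs.IsRightDescent u i <;> by_cases hv : cs.IsRightDescent (cs.simple j * u) i
  · exact Or.inl ⟨hu, hv⟩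
  · exfalso
    have h1 := cs.isRightDescent_iff.mp hu
    have h2 := cs.not_isRightDescent_iff.mp hv
    have h3 := cs.length_simple_mul (u * cs.simple i) j
    rw [← mul_assoc] at h3
    omega
  · refine Or.inr (Or.inr ⟨hu, hv, ?_⟩)
    have hj : cs.IsLeftDescent (cs.simple j * u) j := by
      rw [cs.isLeftDescent_iff, cs.simple_mul_simple_cancel_left]
      omega
    rcases simple_mul_eq_mul_simple_or_length_add_two_le cs hj hv with heq | hshort
    · rw [cs.simple_mul_simple_cancel_left] at heq
      simpa using (congrArg (· * cs.simple i) heq).symm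
    · rw [cs.simple_mul_simple_cancel_left] at hshort
      have := cs.not_isRightDescent_iff.mp hu
      omega
  · exact Or.inr (Or.inl ⟨hu, hv⟩)

def RespectsLeftCovers (f : W → W) : Prop :=
  ∀ (u : W) (j : B), cs.length (cs.simple j * u) = cs.length u + 1 →
    f (cs.simple j * u) = f u ∨
      (f (cs.simple j * u) = cs.simple j * f u ∧
        cs.length (cs.simple j * f u) = cs.length (f u) + 1)

variable {cs}

theorem RespectsLeftCovers.id : RespectsLeftCovers cs id :=
  fun _ _ h => Or.inr ⟨rfl, h⟩

theorem RespectsLeftCovers.comp {f g : W → W} (hf : RespectsLeftCovers cs f)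
    (hg : RespectsLeftCovers cs g) : RespectsLeftCovers cs (f ∘ g) := by
  intro u j h
  rcases hg u j h with hcollapse | ⟨hcover, hlen⟩
  · exact Or.inl (by simp [hcollapse])
  · simpa [hcover] using hf (g u) j hlen

variable (cs)

theorem respectsLeftCovers_piOp (i : B) : RespectsLeftCovers cs (piOp cs i) := by
  intro u j h
  rcases rightDescent_trichotomy cs h i with ⟨hu, hv⟩ | ⟨hu, hv⟩ | ⟨hu, hv, heq⟩
  · exact Or.inr ⟨by simp [piOp, hu, hv], by simpa [piOp, hu] using h⟩
  · refine Or.inr ⟨by simp [piOp, hu, hv, mul_assoc], ?_⟩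
    have h1 := cs.not_isRightDescent_iff.mp hu
    have h2 := cs.not_isRightDescent_iff.mp hv
    simp only [piOp, hu, if_false, ← mul_assoc]
    omega
  · left
    simp only [piOp]
    rw [if_pos hv, if_neg hu, heq]

theorem respectsLeftCovers_pibOp (i : B) : RespectsLeftCovers cs (pibOp cs i) := by
  intro u j h
  rcases rightDescent_trichotomy cs h i with ⟨hu, hv⟩ | ⟨hu, hv⟩ | ⟨hu, hv, heq⟩
  · refine Or.inr ⟨by simp [pibOp, hu, hv, mul_assoc], ?_⟩
    have h1 := cs.isRightDescent_iff.mp hu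
    have h2 := cs.isRightDescent_iff.mp hv
    simp only [pibOp, hu, if_true, ← mul_assoc]
    omega
  · exact Or.inr ⟨by simp [pibOp, hu, hv], by simpa [pibOp, hu] using h⟩
  · left
    simp only [pibOp]
    rw [if_pos hv, if_neg hu, heq, cs.simple_mul_simple_cancel_right]

theorem respectsLeftCovers_of_mem_biHecke {f : Function.End W} (hf : f ∈ biHecke cs) :
    RespectsLeftCovers cs f := by
  induction hf using Submonoid.closure_induction with
  | mem g hg =>
    rcases hg with ⟨i, rfl⟩ | ⟨i, rfl⟩
    · exact respectsLeftCovers_piOp cs i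
    · exact respectsLeftCovers_pibOp cs i
  | one => exact RespectsLeftCovers.id
  | mul g h _ _ hg hh => exact hg.comp hh

variable {cs}

theorem RespectsLeftCovers.map_of_leL {f : W → W} (hf : RespectsLeftCovers cs f) {u v : W}
    (h : leL cs u v) :
    leL cs (f u) (f v) ∧ cs.length (f v) + cs.length u ≤ cs.length (f u) + cs.length v ∧
      (cs.length (f v) + cs.length u = cs.length (f u) + cs.length v →
        f v * (f u)⁻¹ = v * u⁻¹) := by
  induction hn : cs.length (v * u⁻¹) generalizing u with
  | zero =>
    obtain rfl : u = v := (mul_inv_eq_one.mp (cs.length_eq_zero_iff.mp hn)).symm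
    simp [leL_refl]
  | succ n ih =>
    have hne : u ≠ v := by rintro rfl; simp at hn
    obtain ⟨j, hup, hle⟩ := exists_simple_mul_leL cs h hne
    have hn' : cs.length (v * (cs.simple j * u)⁻¹) = n := by unfold leL at h hle; omega
    obtain ⟨ihle, ihlen, iheq⟩ := ih hle hn'
    rcases hf u j hup with hcollapse | ⟨hcover, hlen⟩
    · rw [hcollapse] at ihle ihlen
      exact ⟨ihle, by omega, fun _ => by omega⟩
    · rw [hcover] at ihle ihlen iheq
      refine ⟨leL_trans cs (leL_simple_mul cs hlen) ihle, by omega, fun hlen_eq => ?_⟩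
      simpa [← mul_assoc] using iheq (by omega)

end CoxeterSystem

/-- The image set of any idempotent of the biHecke monoid is an interval in left weak order. -/
theorem biHecke_idempotent_image_interval {B W : Type*} [Group W] [Finite W]
    {M : CoxeterMatrix B} (cs : CoxeterSystem M W) (f : Function.End W)
    (hf : f ∈ biHecke cs) (hidem : IsIdempotentElem f) :
    ∃ a b : W, Set.range f = {x : W | leL cs a x ∧ leL cs x b} := by
  have hcov := respectsLeftCovers_of_mem_biHecke cs hf
  have hfix : ∀ x, f (f x) = f x := fun x => congrFun hidem x
  obtain ⟨w₀, hmax⟩ := Finite.exists_max cs.length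
  refine ⟨f 1, f w₀, Set.ext fun x => ⟨?_, fun ⟨hax, hxb⟩ => ⟨x, ?_⟩⟩⟩
  · rintro ⟨y, rfl⟩
    exact ⟨(hcov.map_of_leL (one_leL cs y)).1,
      (hcov.map_of_leL (leL_of_forall_length_le cs hmax y)).1⟩
  · obtain ⟨-, hlen_ax, heq_ax⟩ := hcov.map_of_leL hax
    obtain ⟨-, hlen_xb, -⟩ := hcov.map_of_leL hxb
    rw [hfix] at hlen_ax heq_ax hlen_xb
    simpa using heq_ax (by omega)
end
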